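/- arXiv:2306.05933 — 2 statements merged into one kernel-verified Lean document; each statement's English description precedes it below -/
import Mathlib

section
/- Let ≺ be a reflection order on Φ⁺, write Φ⁺ = {β₁ ≺ β₂ ≺ ⋯ ≺ β_N}, and let 1 ≤ a ≤ b ≤ N. Then both of the following subsets of Φ are closed under root addition (i.e., whenever α and β lie in the subset and α + β ∈ Φ, also α + β lies in the subset): (i) the interval {β_a, β_{a+1}, …, β_b}; (ii) the set {β_{b+1}, …, β_N} ∪ {−β₁, −β₂, …, −β_{a−1}}. -/
noncomputable section

open Module

variable {V : Type} [AddCommGroup V] [Module ℝ V] [DecidableEq V]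

/-- A finite crystallographic root system in `V`, together with a choice of positive roots. -/
structure RootSystemData (V : Type) [AddCommGroup V] [Module ℝ V] where
  /-- the (finite) set of roots -/
  Φ : Finset V
  /-- the set of positive roots -/
  pos : Finset V
  /-- the coroot `α∨`, viewed as a linear functional on `V` (only its values on `Φ` matter) -/
  coroot : V → Module.Dual ℝ V
  /-- the integer-valued pairing `⟨α∨, β⟩` (crystallographic condition) -/
  pairing : V → V → ℤ
  /-- the reflection `s_α` (only its values for `α ∈ Φ` matter) -/
  s : V → V ≃ₗ[ℝ] V
  span_eq : Submodule.span ℝ (Φ : Set V) = ⊤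
  ne_zero : ∀ α ∈ Φ, α ≠ (0 : V)
  neg_mem : ∀ α ∈ Φ, -α ∈ Φ
  coroot_self : ∀ α ∈ Φ, coroot α α = 2
  pairing_eq : ∀ α ∈ Φ, ∀ β ∈ Φ, (pairing α β : ℝ) = coroot α β
  s_apply : ∀ α ∈ Φ, ∀ v : V, s α v = v - coroot α v • α
  s_root_mem : ∀ α ∈ Φ, ∀ β ∈ Φ, s α β ∈ Φ
  pos_subset : pos ⊆ Φ
  mem_pos_or : ∀ α ∈ Φ, α ∈ pos ∨ -α ∈ pos
  pos_not_neg : ∀ α ∈ pos, -α ∉ pos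
  pos_add_mem : ∀ α ∈ pos, ∀ β ∈ pos, α + β ∈ Φ → α + β ∈ pos

namespace RootSystemData

variable (R : RootSystemData V)

/-- The Weyl group `W`, realized as a subgroup of the linear automorphisms of `V`,
generated by the reflections in the roots. -/
def Wgrp : Subgroup (V ≃ₗ[ℝ] V) := Subgroup.closure ((fun α => R.s α) '' (R.Φ : Set V))

/-- The length function `ℓ(w) = #{α ∈ Φ⁺ : w α ∈ Φ⁻}`. -/
def len (w : V ≃ₗ[ℝ] V) : ℕ := (R.pos.filter fun α => -(w α) ∈ R.pos).card

/-- `⟨α∨, 2ρ⟩ = Σ_{β ∈ Φ⁺} ⟨α∨, β⟩` (an integer). -/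
def pairSum (α : V) : ℤ := ∑ β ∈ R.pos, R.pairing α β

/-- The affine reflection `r_b` (for `b = (γ, ν) ∈ Φ_af`) applied to an affine root `c = (α, k)`:
`r_b (α, k) = (s_γ α, k − ν ⟨γ∨, α⟩)`. -/
def afRefl (b c : V × ℤ) : V × ℤ := (R.s b.1 c.1, c.2 - b.2 * R.pairing b.1 c.1)

/-- Positivity of an affine root `(α, n)`: either `α ∈ Φ⁺` and `n ≥ 0`, or `α ∈ Φ⁻` and `n ≥ 1`. -/
def AfPos (c : V × ℤ) : Prop := (c.1 ∈ R.pos ∧ 0 ≤ c.2) ∨ (-c.1 ∈ R.pos ∧ 1 ≤ c.2)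

/-- The affine reflection `r_b = s_γ t^{ν γ∨}` (for `b = (γ, ν)`), as an element of the
affine Weyl group realized as pairs `(w, μ) ∈ W × (coweights)` representing `w t^μ`. -/
def rE (b : V × ℤ) : (V ≃ₗ[ℝ] V) × Module.Dual ℝ V := (R.s b.1, (b.2 : ℝ) • R.coroot b.1)

end RootSystemData

/-- Multiplication in the affine Weyl group `W̃ = W ⋉ Λ`, where `(w, μ)` represents `w t^μ`:
`(w t^μ)(w' t^{μ'}) = (w w') t^{w'⁻¹ μ + μ'}`, and the contragredient action on coweights is
`w'⁻¹ • μ = μ ∘ w'`. -/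
def amul (x y : (V ≃ₗ[ℝ] V) × Module.Dual ℝ V) : (V ≃ₗ[ℝ] V) × Module.Dual ℝ V :=
  (x.1 * y.1, x.2 ∘ₗ y.1.toLinearMap + y.2)

/-- The ordered product `x₁ x₂ ⋯ x_k` in the affine Weyl group. -/
def aprod (l : List ((V ≃ₗ[ℝ] V) × Module.Dual ℝ V)) : (V ≃ₗ[ℝ] V) × Module.Dual ℝ V :=
  l.foldr amul (1, 0)

namespace RootSystemData

variable (R : RootSystemData V)

/-- Given affine roots `b 0, …, b (K-1)`, this is `r_{b_{K-1}} ⋯ r_{b_{h+1}} r_{b_h} (b h)`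
(apply the reflections with indices `≥ h` in ascending order of application). -/
def twist {K : ℕ} (b : Fin K → V × ℤ) (h : Fin K) : V × ℤ :=
  (((List.finRange K).filter fun j => h ≤ j).foldl (fun c j => R.afRefl (b j) c) (b h))

/-- Given affine roots `b 0, …, b (K-1)`, this is `r_{b_{K-1}} ⋯ r_{b_{h+1}} (b h)`
(apply the reflections with indices `> h` in ascending order of application). -/
def twistStrict {K : ℕ} (b : Fin K → V × ℤ) (h : Fin K) : V × ℤ :=
  (((List.finRange K).filter fun j => h < j).foldl (fun c j => R.afRefl (b j) c) (b h))

end RootSystemData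

/-- A reflection order on `Φ⁺`, given by an enumeration `β 0 ≺ β 1 ≺ ⋯ ≺ β (N-1)` of the
positive roots such that whenever `β i + β j = β k` one has `i < k < j` or `j < k < i`. -/
structure ReflectionOrder (R : RootSystemData V) (N : ℕ) where
  β : Fin N → V
  inj : Function.Injective β
  range_eq : Set.range β = (R.pos : Set V)
  order3 : ∀ i j k : Fin N, β i + β j = β k → (i < k ∧ k < j) ∨ (j < k ∧ k < i)

/-- An increasing labelled path in the double Bruhat graph `DBG(W)` from `u` to `v`:
a sequence of edges `u = u₁ → u₂ → ⋯ → u_{ℓ+1} = v`, whose labels are positive roots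
`lab (ix 1), …, lab (ix ℓ)` with `ix` strictly monotone (so the path is increasing for the
order given by the enumeration `lab`) and all indices lying in the allowed set `S`;
the edge from `u_i` carries an integer `m i ≥ 0`, with `m i ≥ 1` if `u_i (α_i) ∈ Φ⁻`. -/
structure IncPath (R : RootSystemData V) {N : ℕ} (lab : Fin N → V) (S : Set (Fin N))
    (u v : V ≃ₗ[ℝ] V) where
  len : ℕ
  ix : Fin len → Fin N
  mono : StrictMono ix
  mem_S : ∀ i, ix i ∈ S
  m : Fin len → ℤ
  vert : Fin (len + 1) → V ≃ₗ[ℝ] V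
  vert_zero : vert 0 = u
  vert_last : vert (Fin.last len) = v
  lab_mem : ∀ i : Fin len, lab (ix i) ∈ R.pos
  step : ∀ i : Fin len, vert i.succ = vert i.castSucc * R.s (lab (ix i))
  m_lb : ∀ i : Fin len, (if vert i.castSucc (lab (ix i)) ∈ R.pos then (0 : ℤ) else 1) ≤ m i

/-- The weight `wt(p) = m₁ α₁∨ + ⋯ + m_ℓ α_ℓ∨` of a path, as a coweight. -/
def IncPath.wt {R : RootSystemData V} {N : ℕ} {lab : Fin N → V} {S : Set (Fin N)}
    {u v : V ≃ₗ[ℝ] V} (p : IncPath R lab S u v) : Module.Dual ℝ V :=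
  ∑ i : Fin p.len, (p.m i : ℝ) • R.coroot (lab (p.ix i))

/-- A path in the quantum Bruhat graph `QBG(W)` from `u` to `v`: every edge is either an
edge `w →^{(α,0)} w s_α` with `ℓ(w s_α) = ℓ(w) + 1`, or an edge `w →^{(α,1)} w s_α` with
`ℓ(w s_α) = ℓ(w) + 1 − ⟨α∨, 2ρ⟩`. -/
structure QPath (R : RootSystemData V) (u v : V ≃ₗ[ℝ] V) where
  len : ℕ
  lab : Fin len → V
  lab_mem : ∀ i, lab i ∈ R.pos
  m : Fin len → ℤ
  vert : Fin (len + 1) → V ≃ₗ[ℝ] V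
  vert_zero : vert 0 = u
  vert_last : vert (Fin.last len) = v
  step : ∀ i : Fin len, vert i.succ = vert i.castSucc * R.s (lab i)
  edge : ∀ i : Fin len,
    (m i = 0 ∧ R.len (vert i.succ) = R.len (vert i.castSucc) + 1) ∨
    (m i = 1 ∧ (R.len (vert i.succ) : ℤ) = (R.len (vert i.castSucc) : ℤ) + 1 - R.pairSum (lab i))

/-- The weight of a path in the quantum Bruhat graph. -/
def QPath.wt {R : RootSystemData V} {u v : V ≃ₗ[ℝ] V} (q : QPath R u v) : Module.Dual ℝ V :=
  ∑ i : Fin q.len, (q.m i : ℝ) • R.coroot (q.lab i)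

/-- A simple root: a positive root that is not the sum of two positive roots. -/
def IsSimpleRoot (R : RootSystemData V) (α : V) : Prop :=
  α ∈ R.pos ∧ ¬ ∃ β ∈ R.pos, ∃ γ ∈ R.pos, α = β + γ

/-- `l` is a reduced word for `w`: a list of simple roots whose reflections multiply to `w`,
of length `ℓ(w)`. -/
def IsReducedWord (R : RootSystemData V) (l : List V) (w : V ≃ₗ[ℝ] V) : Prop :=
  (∀ a ∈ l, IsSimpleRoot R a) ∧ (l.map R.s).prod = w ∧ l.length = R.len w

/-- Bruhat order: `x ≤ y` iff some reduced word for `y` contains a subword which is a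
reduced word for `x`. -/
def BruhatLE (R : RootSystemData V) (x y : V ≃ₗ[ℝ] V) : Prop :=
  ∃ ly : List V, IsReducedWord R ly y ∧ ∃ lx : List V, lx.Sublist ly ∧ IsReducedWord R lx x

/-- An admissible type for `(x, u, ≺)`, bounded by `n`: indices `n₁ < ⋯ < n_K ≤ n` and
integers `ν₁, …, ν_K` such that, with `b_h = (u β_{n_h}, ν_h)`, each
`r_{b_K} ⋯ r_{b_{h+1}} (b_h)` is a negative affine root and `r_{b₁} ⋯ r_{b_K} = x` in `W̃`. -/
structure AdmissibleType (R : RootSystemData V) {N : ℕ} (RO : ReflectionOrder R N) (n : ℕ)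
    (u : V ≃ₗ[ℝ] V) (x : (V ≃ₗ[ℝ] V) × Module.Dual ℝ V) where
  K : ℕ
  idx : Fin K → Fin N
  mono : StrictMono idx
  bounded : ∀ h, (idx h : ℕ) < n
  ν : Fin K → ℤ
  neg_cond : ∀ h : Fin K, ¬ R.AfPos (R.twistStrict (fun j => (u (RO.β (idx j)), ν j)) h)
  prod_eq : aprod (List.ofFn fun h : Fin K => R.rE (u (RO.β (idx h)), ν h)) = x

end

namespace ReflectionOrder

variable {V : Type} [AddCommGroup V] [Module ℝ V] {R : RootSystemData V} {N : ℕ}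
  (RO : ReflectionOrder R N)

theorem β_mem_pos (i : Fin N) : RO.β i ∈ R.pos := by
  rw [← Finset.mem_coe, ← RO.range_eq]
  exact ⟨i, rfl⟩

theorem exists_β_eq {v : V} (hv : v ∈ R.pos) : ∃ k, RO.β k = v := by
  rwa [← Finset.mem_coe, ← RO.range_eq] at hv

theorem exists_β_eq_add {i j : Fin N} (h : RO.β i + RO.β j ∈ R.Φ) :
    ∃ k, RO.β k = RO.β i + RO.β j ∧ min i j < k ∧ k < max i j := by
  obtain ⟨k, hk⟩ := RO.exists_β_eq (R.pos_add_mem _ (RO.β_mem_pos i) _ (RO.β_mem_pos j) h)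
  refine ⟨k, hk, ?_⟩
  rcases RO.order3 i j k hk.symm with ⟨hik, hkj⟩ | ⟨hjk, hki⟩
  · exact ⟨min_lt_iff.2 (.inl hik), lt_max_iff.2 (.inr hkj)⟩
  · exact ⟨min_lt_iff.2 (.inr hjk), lt_max_iff.2 (.inl hki)⟩

/-- Writing `β i - β j = ± β k`, the relation `β k + β j = β i` (resp. `β k + β i = β j`) puts
`i` (resp. `j`) strictly between the other two indices. -/
theorem exists_β_eq_sub {i j : Fin N} (hji : j < i) (h : RO.β i - RO.β j ∈ R.Φ) :
    (∃ k, i < k ∧ RO.β k = RO.β i - RO.β j) ∨ (∃ k, k < j ∧ -RO.β k = RO.β i - RO.β j) := by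
  rcases R.mem_pos_or _ h with hpos | hneg
  · obtain ⟨k, hk⟩ := RO.exists_β_eq hpos
    have hsum : RO.β k + RO.β j = RO.β i := by rw [hk]; abel
    rcases RO.order3 k j i hsum with ⟨-, hij⟩ | ⟨-, hik⟩
    · exact absurd hji hij.asymm
    · exact .inl ⟨k, hik, hk⟩
  · obtain ⟨k, hk⟩ := RO.exists_β_eq hneg
    have hsum : RO.β k + RO.β i = RO.β j := by rw [hk]; abel
    rcases RO.order3 k i j hsum with ⟨hkj, -⟩ | ⟨hij, -⟩
    · exact .inr ⟨k, hkj, by rw [hk, neg_neg]⟩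
    · exact absurd hji hij.asymm

theorem add_mem_image_Icc {a b : Fin N} {x y : V} (hx : x ∈ RO.β '' {i | a ≤ i ∧ i ≤ b})
    (hy : y ∈ RO.β '' {i | a ≤ i ∧ i ≤ b}) (h : x + y ∈ R.Φ) :
    x + y ∈ RO.β '' {i | a ≤ i ∧ i ≤ b} := by
  obtain ⟨i, ⟨hai, hib⟩, rfl⟩ := hx
  obtain ⟨j, ⟨haj, hjb⟩, rfl⟩ := hy
  obtain ⟨k, hk, hk_gt, hk_lt⟩ := RO.exists_β_eq_add h
  exact ⟨k, ⟨(le_min hai haj).trans hk_gt.le, hk_lt.le.trans (max_le hib hjb)⟩, hk⟩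

def tailUnionNegHead (a b : Fin N) : Set V :=
  RO.β '' {i | b < i} ∪ (fun i => -RO.β i) '' {i | i < a}

theorem add_mem_tailUnionNegHead_of_lt {a b i j : Fin N} (hab : a ≤ b) (hi : b < i) (hj : j < a)
    (h : RO.β i + -RO.β j ∈ R.Φ) : RO.β i + -RO.β j ∈ RO.tailUnionNegHead a b := by
  rw [← sub_eq_add_neg] at h ⊢
  rcases RO.exists_β_eq_sub ((hj.trans_le hab).trans hi) h with ⟨k, hik, hk⟩ | ⟨k, hkj, hk⟩
  · exact .inl ⟨k, hi.trans hik, hk⟩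
  · exact .inr ⟨k, hkj.trans hj, hk⟩

theorem add_mem_tailUnionNegHead {a b : Fin N} (hab : a ≤ b) {x y : V}
    (hx : x ∈ RO.tailUnionNegHead a b) (hy : y ∈ RO.tailUnionNegHead a b)
    (h : x + y ∈ R.Φ) : x + y ∈ RO.tailUnionNegHead a b := by
  rcases hx with ⟨i, hi, rfl⟩ | ⟨i, hi, rfl⟩ <;> rcases hy with ⟨j, hj, rfl⟩ | ⟨j, hj, rfl⟩
  · obtain ⟨k, hk, hk_gt, -⟩ := RO.exists_β_eq_add h
    exact .inl ⟨k, (lt_min hi hj).trans hk_gt, hk⟩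
  · exact RO.add_mem_tailUnionNegHead_of_lt hab hi hj h
  · rw [add_comm] at h ⊢
    exact RO.add_mem_tailUnionNegHead_of_lt hab hj hi h
  · have hpos : RO.β i + RO.β j ∈ R.Φ := by
      simpa [add_comm] using R.neg_mem _ h
    obtain ⟨k, hk, -, hk_lt⟩ := RO.exists_β_eq_add hpos
    exact .inr ⟨k, hk_lt.trans (max_lt hi hj),
      show -RO.β k = -RO.β i + -RO.β j by rw [hk, neg_add]⟩

end ReflectionOrder

variable {V : Type} [AddCommGroup V] [Module ℝ V] [DecidableEq V]

/-- for a reflection order `β₁ ≺ ⋯ ≺ β_N` and `1 ≤ a ≤ b ≤ N`, both the interval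
`{β_a, …, β_b}` and the set `{β_{b+1}, …, β_N} ∪ {−β₁, …, −β_{a−1}}` are closed under
root addition. (Indices are 0-based here: `a ≤ i ≤ b`, resp. `i > b` and `i < a`.) -/
theorem statement0 (R : RootSystemData V) {N : ℕ} (RO : ReflectionOrder R N)
    (a b : Fin N) (hab : a ≤ b) :
    (∀ x ∈ RO.β '' {i : Fin N | a ≤ i ∧ i ≤ b}, ∀ y ∈ RO.β '' {i : Fin N | a ≤ i ∧ i ≤ b},
        x + y ∈ (R.Φ : Set V) → x + y ∈ RO.β '' {i : Fin N | a ≤ i ∧ i ≤ b})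
    ∧ (∀ x ∈ RO.β '' {i : Fin N | b < i} ∪ (fun i => -RO.β i) '' {i : Fin N | i < a},
        ∀ y ∈ RO.β '' {i : Fin N | b < i} ∪ (fun i => -RO.β i) '' {i : Fin N | i < a},
          x + y ∈ (R.Φ : Set V) →
            x + y ∈ RO.β '' {i : Fin N | b < i} ∪ (fun i => -RO.β i) '' {i : Fin N | i < a}) := by
  exact ⟨fun _ hx _ hy => RO.add_mem_image_Icc hx hy,
    fun _ hx _ hy => RO.add_mem_tailUnionNegHead hab hx hy⟩
end

section
/- Let ≺ be a reflection order on Φ⁺ (Φ⁺ = {β₁ ≺ ⋯ ≺ β_N}), let x = w t^μ ∈ W̃ with w ∈ W and μ ∈ Λ, let u ∈ W, and let 0 ≤ n ≤ N. Let A be the set of tuples ((n₁, ν₁), …, (n_K, ν_K)) with K ≥ 0, 1 ≤ n₁ < n₂ < ⋯ < n_K ≤ n and ν₁, …, ν_K ∈ ℤ such that, setting b_h := (uβ_{n_h}, ν_h) ∈ Φ_af, the affine root r_{b_K} r_{b_{K−1}} ⋯ r_{b_{h+1}}(b_h) is negative for every h ∈ {1, …, K}, and r_{b₁} r_{b₂}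 ⋯ r_{b_K} = x in W̃. Let P be the set of paths p ∈ Paths^≺_{≤n}(w⁻¹u ⇒ u) with wt(p) = u⁻¹wμ. Then the following assignment is a well-defined bijection from A onto P: send ((n₁, ν₁), …, (n_K, ν_K)) to the ≺-increasing path of length K from w⁻¹u to u whose edge labels are the roots β_{n₁}, …, β_{n_K}, and in which the edge labelled β_{n_h} carries the integer m'_h, where (β'_h, m'_h) := r_{b_K} r_{b_{K−1}} ⋯ r_{b_h}(b_h) ∈ Φ_af. -/
/-!
Write `b_h = (u β_{n_h}, ν_h)`, `P_h = s_{β_{n_1}} ⋯ s_{β_{n_h}}` and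
`(β'_h, m'_h) = r_{b_K} ⋯ r_{b_h}(b_h)`. Because `s_{u α} = u s_α u⁻¹`, the finite part of
`r_{b_1} ⋯ r_{b_K}` is `u P_K u⁻¹`; it equals `w` exactly when the walk from `w⁻¹ u` with labels
`β_{n_1}, …, β_{n_K}` ends at `u`. In that case `β'_h = (w⁻¹ u P_{h-1}) β_{n_h}` is the `h`-th
label moved by the vertex where the `h`-th edge starts, so negativity of
`r_{b_K} ⋯ r_{b_{h+1}}(b_h) = -(β'_h, m'_h)` is exactly the lower bound on the edge integer `m'_h`.
An induction on `K` gives `r_{b_1} ⋯ r_{b_K} = t^λ u P_K u⁻¹` with `λ = Σ_h m'_h (u β_{n_h})∨`,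
so the translation parts match iff the path has weight `u⁻¹ w μ`. Finally `(ν_h) ↦ (m'_h)` is a
bijection of `ℤ^K`, being triangular: `m'_h + ν_h` depends only on `ν_{h+1}, …, ν_K`.
-/

namespace RootSystemData

variable {V : Type} [AddCommGroup V] [Module ℝ V] (R : RootSystemData V)

lemma s_apply_self {α : V} (hα : α ∈ R.Φ) : R.s α α = -α := by
  rw [R.s_apply α hα, R.coroot_self α hα, two_smul]; abel

lemma s_mul_self {α : V} (hα : α ∈ R.Φ) : R.s α * R.s α = 1 := by
  ext v
  simp only [LinearEquiv.mul_apply, LinearEquiv.coe_one, id_eq, R.s_apply α hα, map_sub,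
    map_smul, R.coroot_self α hα, smul_eq_mul]
  module

lemma s_inv {α : V} (hα : α ∈ R.Φ) : (R.s α)⁻¹ = R.s α :=
  inv_eq_of_mul_eq_one_left (R.s_mul_self hα)

lemma map_mem_of_mem_Wgrp {g : V ≃ₗ[ℝ] V} (hg : g ∈ R.Wgrp) {α : V} (hα : α ∈ R.Φ) :
    g α ∈ R.Φ := by
  induction hg using Subgroup.closure_induction'' generalizing α with
  | mem _ hx => obtain ⟨β, hβ, rfl⟩ := hx; exact R.s_root_mem β hβ α hα
  | inv_mem _ hx => obtain ⟨β, hβ, rfl⟩ := hx; rw [R.s_inv hβ]; exact R.s_root_mem β hβ α hα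
  | one => exact hα
  | mul _ _ _ _ hx hy => exact hx (hy hα)

/-- Both sides are coroots for the vector `g α` whose reflections preserve the finite spanning
set `Φ`, and such a coroot is unique. -/
lemma coroot_map {g : V ≃ₗ[ℝ] V} (hg : g ∈ R.Wgrp) {α : V} (hα : α ∈ R.Φ) :
    R.coroot (g α) = R.coroot α ∘ₗ (g⁻¹ : V ≃ₗ[ℝ] V).toLinearMap := by
  have hgα := R.map_mem_of_mem_Wgrp hg hα
  refine Module.Dual.eq_of_preReflection_mapsTo R.Φ.finite_toSet R.span_eq
    (R.coroot_self _ hgα) (fun β hβ => ?_) (by simp [R.coroot_self α hα]) (fun β hβ => ?_)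
  · rw [Module.preReflection_apply, ← R.s_apply _ hgα]
    exact R.s_root_mem _ hgα β hβ
  · have h : g (R.s α (g⁻¹ β)) ∈ R.Φ := R.map_mem_of_mem_Wgrp hg
      (R.s_root_mem α hα _ (R.map_mem_of_mem_Wgrp (inv_mem hg) hβ))
    simpa [Module.preReflection_apply, R.s_apply α hα] using h

lemma s_map {g : V ≃ₗ[ℝ] V} (hg : g ∈ R.Wgrp) {α : V} (hα : α ∈ R.Φ) :
    R.s (g α) = g * R.s α * g⁻¹ := by
  ext v
  simp [R.s_apply _ (R.map_mem_of_mem_Wgrp hg hα), R.s_apply α hα, R.coroot_map hg hα]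

lemma pairing_self {α : V} (hα : α ∈ R.Φ) : R.pairing α α = 2 := by
  exact_mod_cast (R.pairing_eq α hα α hα).trans (R.coroot_self α hα)

lemma pairing_neg_right {α β : V} (hα : α ∈ R.Φ) (hβ : β ∈ R.Φ) :
    R.pairing α (-β) = -R.pairing α β := by
  have : (R.pairing α (-β) : ℝ) = -(R.pairing α β : ℝ) := by
    rw [R.pairing_eq α hα _ (R.neg_mem β hβ), R.pairing_eq α hα β hβ, map_neg]
  exact_mod_cast this

lemma afPos_iff [DecidableEq V] {c : V × ℤ} (hc : c.1 ∈ R.Φ) :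
    R.AfPos c ↔ (if c.1 ∈ R.pos then (0 : ℤ) else 1) ≤ c.2 := by
  have := R.pos_not_neg c.1
  have := R.mem_pos_or c.1 hc
  unfold AfPos
  split_ifs <;> grind

lemma afPos_neg_iff {c : V × ℤ} (hc : c.1 ∈ R.Φ) : R.AfPos (-c) ↔ ¬ R.AfPos c := by
  have := R.pos_not_neg c.1
  have := R.mem_pos_or c.1 hc
  unfold AfPos
  simp only [Prod.fst_neg, Prod.snd_neg, neg_neg]
  grind

end RootSystemData

section AffineWeylGroup

variable {V : Type} [AddCommGroup V] [Module ℝ V]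

lemma amul_assoc (x y z : (V ≃ₗ[ℝ] V) × Module.Dual ℝ V) :
    amul (amul x y) z = amul x (amul y z) := by
  ext <;> simp [amul, mul_assoc, add_assoc]

lemma aprod_append_singleton (l : List ((V ≃ₗ[ℝ] V) × Module.Dual ℝ V))
    (x : (V ≃ₗ[ℝ] V) × Module.Dual ℝ V) :
    aprod (l ++ [x]) = amul (aprod l) x := by
  induction l with
  | nil => ext <;> simp [aprod, amul]
  | cons a t ih => simp only [aprod, List.cons_append, List.foldr_cons] at ih ⊢; rw [ih, amul_assoc]

lemma aprod_ofFn_succ {K : ℕ} (f : Fin (K + 1) → (V ≃ₗ[ℝ] V) × Module.Dual ℝ V) :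
    aprod (List.ofFn f) = amul (aprod (List.ofFn fun j => f j.castSucc)) (f (Fin.last K)) := by
  rw [List.ofFn_succ', List.concat_eq_append, aprod_append_singleton]

end AffineWeylGroup

lemma List.foldl_filter_finRange_succ {α : Type*} {K : ℕ} (p : Fin (K + 1) → Bool)
    (f : α → Fin (K + 1) → α) (x : α) :
    ((List.finRange (K + 1)).filter p).foldl f x =
      let y := ((List.finRange K).filter fun j => p j.castSucc).foldl (fun c j => f c j.castSucc) x
      if p (Fin.last K) then f y (Fin.last K) else y := by
  rw [List.finRange_succ_last, List.filter_append, List.filter_map, List.foldl_append,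
    List.foldl_map]
  cases hp : p (Fin.last K) <;> simp [hp, Function.comp_def]

lemma Fin.partialProd_last_succ {M : Type*} [Monoid M] {K : ℕ} (f : Fin (K + 1) → M) :
    Fin.partialProd f (Fin.last (K + 1)) =
      Fin.partialProd (fun j => f j.castSucc) (Fin.last K) * f (Fin.last K) := by
  rw [← Fin.succ_last, Fin.partialProd_succ, ← Fin.partialProd_init]
  rfl

namespace RootSystemData

variable {V : Type} [AddCommGroup V] [Module ℝ V] (R : RootSystemData V)

lemma afRefl_self {b : V × ℤ} (hb : b.1 ∈ R.Φ) : R.afRefl b b = -b := by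
  ext
  · exact R.s_apply_self hb
  · simp only [afRefl, R.pairing_self hb, Prod.snd_neg]; ring

lemma afRefl_neg {b c : V × ℤ} (hb : b.1 ∈ R.Φ) (hc : c.1 ∈ R.Φ) :
    R.afRefl b (-c) = -R.afRefl b c := by
  ext
  · exact map_neg _ _
  · simp only [afRefl, Prod.fst_neg, Prod.snd_neg, R.pairing_neg_right hb hc]; ring

lemma twist_last {K : ℕ} (b : Fin (K + 1) → V × ℤ) (hb : (b (Fin.last K)).1 ∈ R.Φ) :
    R.twist b (Fin.last K) = -b (Fin.last K) := by
  simp [twist, List.foldl_filter_finRange_succ, R.afRefl_self hb]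

lemma twist_castSucc {K : ℕ} (b : Fin (K + 1) → V × ℤ) (h : Fin K) :
    R.twist b h.castSucc = R.afRefl (b (Fin.last K)) (R.twist (fun j => b j.castSucc) h) := by
  simp [twist, List.foldl_filter_finRange_succ, Fin.le_last]

lemma twist_snd_castSucc {K : ℕ} (b : Fin (K + 1) → V × ℤ) (i : Fin K) :
    (R.twist b i.castSucc).2 = (R.twist (fun j => b j.castSucc) i).2 -
      (b (Fin.last K)).2 * R.pairing (b (Fin.last K)).1 (R.twist (fun j => b j.castSucc) i).1 := by
  rw [R.twist_castSucc]; rfl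

lemma twistStrict_last {K : ℕ} (b : Fin (K + 1) → V × ℤ) :
    R.twistStrict b (Fin.last K) = b (Fin.last K) := by
  simp [twistStrict, List.foldl_filter_finRange_succ, (Fin.castSucc_lt_last _).not_gt]

lemma twistStrict_castSucc {K : ℕ} (b : Fin (K + 1) → V × ℤ) (h : Fin K) :
    R.twistStrict b h.castSucc =
      R.afRefl (b (Fin.last K)) (R.twistStrict (fun j => b j.castSucc) h) := by
  simp [twistStrict, List.foldl_filter_finRange_succ]

lemma twist_fst_mem {K : ℕ} (b : Fin K → V × ℤ) (hb : ∀ j, (b j).1 ∈ R.Φ) (h : Fin K) :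
    (R.twist b h).1 ∈ R.Φ := by
  induction K with
  | zero => exact h.elim0
  | succ K ih =>
    induction h using Fin.lastCases with
    | last => rw [R.twist_last b (hb _)]; exact R.neg_mem _ (hb _)
    | cast i =>
      rw [R.twist_castSucc]
      exact R.s_root_mem _ (hb _) _ (ih _ (fun j => hb _) i)

lemma twist_eq_neg_twistStrict {K : ℕ} (b : Fin K → V × ℤ) (hb : ∀ j, (b j).1 ∈ R.Φ)
    (h : Fin K) : R.twist b h = -R.twistStrict b h := by
  induction K with
  | zero => exact h.elim0
  | succ K ih =>
    induction h using Fin.lastCases with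
    | last => rw [R.twist_last b (hb _), R.twistStrict_last]
    | cast i =>
      have hb' : ∀ j : Fin K, (b j.castSucc).1 ∈ R.Φ := fun j => hb _
      have hmem : (R.twistStrict (fun j => b j.castSucc) i).1 ∈ R.Φ := by
        simpa [ih _ hb' i] using R.neg_mem _ (R.twist_fst_mem _ hb' i)
      rw [R.twist_castSucc, R.twistStrict_castSucc, ih _ hb' i, R.afRefl_neg (hb _) hmem]

lemma twistStrict_fst_mem {K : ℕ} (b : Fin K → V × ℤ) (hb : ∀ j, (b j).1 ∈ R.Φ) (h : Fin K) :
    (R.twistStrict b h).1 ∈ R.Φ := by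
  simpa [R.twist_eq_neg_twistStrict b hb h] using R.neg_mem _ (R.twist_fst_mem b hb h)

lemma not_afPos_twistStrict_iff {K : ℕ} (b : Fin K → V × ℤ) (hb : ∀ j, (b j).1 ∈ R.Φ)
    (h : Fin K) : ¬ R.AfPos (R.twistStrict b h) ↔ R.AfPos (R.twist b h) := by
  rw [R.twist_eq_neg_twistStrict b hb, R.afPos_neg_iff (R.twistStrict_fst_mem b hb h)]

lemma twist_fst {K : ℕ} (b : Fin K → V × ℤ) (hb : ∀ j, (b j).1 ∈ R.Φ) (h : Fin K) :
    (R.twist b h).1 = (Fin.partialProd (fun j => R.s (b j).1) (Fin.last K))⁻¹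
      (Fin.partialProd (fun j => R.s (b j).1) h.castSucc (b h).1) := by
  induction K with
  | zero => exact h.elim0
  | succ K ih =>
    rw [Fin.partialProd_last_succ, mul_inv_rev, R.s_inv (hb _), LinearEquiv.mul_apply]
    induction h using Fin.lastCases with
    | last =>
      rw [R.twist_last b (hb _), ← Fin.partialProd_init]
      unfold Fin.init
      simp [R.s_apply_self (hb _)]
    | cast i =>
      rw [R.twist_castSucc, ← Fin.partialProd_init]
      exact congrArg (R.s _) (ih _ (fun j => hb _) i)

lemma aprod_rE_fst {K : ℕ} (b : Fin K → V × ℤ) :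
    (aprod (List.ofFn fun j => R.rE (b j))).1 =
      Fin.partialProd (fun j => R.s (b j).1) (Fin.last K) := by
  induction K with
  | zero => rfl
  | succ K ih => rw [aprod_ofFn_succ, Fin.partialProd_last_succ, ← ih]; rfl

lemma inv_partialProd_apply {K : ℕ} (b : Fin K → V × ℤ) (hb : ∀ j, (b j).1 ∈ R.Φ) (v : V) :
    (Fin.partialProd (fun j => R.s (b j).1) (Fin.last K))⁻¹ v =
      v + ∑ h, R.coroot (b h).1 v • (R.twist b h).1 := by
  induction K with
  | zero => simp
  | succ K ih =>
    rw [Fin.partialProd_last_succ, mul_inv_rev, R.s_inv (hb _), LinearEquiv.mul_apply,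
      ih _ (fun j => hb _), Fin.sum_univ_castSucc, R.twist_last b (hb _)]
    simp only [map_add, map_sum, map_smul, R.twist_castSucc, afRefl, R.s_apply _ (hb _) v]
    simp only [Prod.fst_neg, smul_neg]
    abel

lemma coroot_apply_twist_fst {K : ℕ} (b : Fin K → V × ℤ) (hb : ∀ j, (b j).1 ∈ R.Φ) {γ : V}
    (hγ : γ ∈ R.Φ) (h : Fin K) :
    R.coroot γ (R.twist b h).1 = R.pairing γ (R.twist b h).1 :=
  (R.pairing_eq γ hγ _ (R.twist_fst_mem b hb h)).symm

lemma aprod_rE_snd_apply {K : ℕ} (b : Fin K → V × ℤ) (hb : ∀ j, (b j).1 ∈ R.Φ) (v : V) :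
    (aprod (List.ofFn fun j => R.rE (b j))).2
        ((Fin.partialProd (fun j => R.s (b j).1) (Fin.last K))⁻¹ v) =
      ∑ h, ((R.twist b h).2 : ℝ) * R.coroot (b h).1 v := by
  induction K with
  | zero => simp [aprod]
  | succ K ih =>
    have hb' : ∀ j : Fin K, (b j.castSucc).1 ∈ R.Φ := fun j => hb _
    have hγ := hb (Fin.last K)
    set x := (Fin.partialProd (fun j => R.s (b j.castSucc).1) (Fin.last K))⁻¹ v
    have hss : R.s (b (Fin.last K)).1 (R.s (b (Fin.last K)).1 x) = x := by
      rw [← LinearEquiv.mul_apply, R.s_mul_self hγ]; rfl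
    have hcs : R.coroot (b (Fin.last K)).1 (R.s (b (Fin.last K)).1 x) =
        -R.coroot (b (Fin.last K)).1 x := by
      rw [R.s_apply _ hγ, map_sub, map_smul, R.coroot_self _ hγ, smul_eq_mul]; ring
    have hcx : R.coroot (b (Fin.last K)).1 x = R.coroot (b (Fin.last K)).1 v + ∑ h,
        (R.pairing (b (Fin.last K)).1 (R.twist (fun j => b j.castSucc) h).1 : ℝ) *
          R.coroot (b h.castSucc).1 v := by
      simp [x, R.inv_partialProd_apply _ hb', R.coroot_apply_twist_fst _ hb' hγ, mul_comm]
    rw [aprod_ofFn_succ, Fin.partialProd_last_succ, mul_inv_rev, R.s_inv hγ,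
      LinearEquiv.mul_apply, Fin.sum_univ_castSucc, R.twist_last b hγ]
    change (aprod _).2 (R.s _ (R.s _ x)) + ((b (Fin.last K)).2 : ℝ) * R.coroot _ (R.s _ x) = _
    rw [hss, hcs, hcx, ih _ hb']
    simp only [R.twist_snd_castSucc, Prod.snd_neg]
    push_cast
    simp only [mul_neg, mul_add, Finset.mul_sum, sub_mul, Finset.sum_sub_distrib, mul_assoc]
    ring

lemma twist_fst_congr_snd {K : ℕ} (γ : Fin K → V) (hγ : ∀ j, γ j ∈ R.Φ) (ν ν' : Fin K → ℤ)
    (h : Fin K) : (R.twist (fun j => (γ j, ν j)) h).1 = (R.twist (fun j => (γ j, ν' j)) h).1 := by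
  rw [R.twist_fst _ hγ, R.twist_fst _ hγ]

lemma twist_snd_injective {K : ℕ} (γ : Fin K → V) (hγ : ∀ j, γ j ∈ R.Φ) :
    Function.Injective fun ν : Fin K → ℤ => fun h => (R.twist (fun j => (γ j, ν j)) h).2 := by
  induction K with
  | zero => intro _ _ _; exact Subsingleton.elim _ _
  | succ K ih =>
    intro ν ν' hνν'
    have hlast : ν (Fin.last K) = ν' (Fin.last K) := by
      have h := congrFun hνν' (Fin.last K)
      simpa [R.twist_last (fun j => (γ j, ν j)) (hγ _),
        R.twist_last (fun j => (γ j, ν' j)) (hγ _)] using h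
    have hinit : (fun j : Fin K => ν j.castSucc) = fun j => ν' j.castSucc := by
      refine ih (fun j => γ j.castSucc) (fun j => hγ _) (funext fun i => ?_)
      have h := congrFun hνν' i.castSucc
      simp only [R.twist_snd_castSucc, hlast,
        R.twist_fst_congr_snd _ (fun j => hγ j.castSucc) (fun j => ν j.castSucc)
          (fun j => ν' j.castSucc), sub_left_inj] at h
      exact h
    funext h
    induction h using Fin.lastCases with
    | last => exact hlast
    | cast i => exact congrFun hinit i

lemma twist_snd_surjective {K : ℕ} (γ : Fin K → V) (hγ : ∀ j, γ j ∈ R.Φ) :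
    Function.Surjective fun ν : Fin K → ℤ => fun h => (R.twist (fun j => (γ j, ν j)) h).2 := by
  induction K with
  | zero => intro m; exact ⟨fun _ => 0, Subsingleton.elim _ _⟩
  | succ K ih =>
    intro m
    let c : Fin K → ℤ := fun i => R.pairing (γ (Fin.last K))
      (R.twist (fun j => (γ j.castSucc, (0 : ℤ))) i).1
    obtain ⟨ν, hν⟩ := ih (fun j => γ j.castSucc) (fun j => hγ _)
      fun i => m i.castSucc - m (Fin.last K) * c i
    refine ⟨Fin.snoc (α := fun _ => ℤ) ν (-m (Fin.last K)), funext fun h => ?_⟩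
    induction h using Fin.lastCases with
    | last => simp [R.twist_last (fun j => (γ j, Fin.snoc (α := fun _ => ℤ) ν _ j)) (hγ _)]
    | cast i =>
      have h := congrFun hν i
      simp only [R.twist_snd_castSucc, Fin.snoc_castSucc, Fin.snoc_last] at h ⊢
      rw [h, R.twist_fst_congr_snd _ (fun j => hγ j.castSucc) ν fun _ => 0]
      ring

lemma partialProd_s_map {g : V ≃ₗ[ℝ] V} (hg : g ∈ R.Wgrp) {K : ℕ} (γ : Fin K → V)
    (hγ : ∀ j, γ j ∈ R.Φ) (i : Fin (K + 1)) :
    Fin.partialProd (fun j => R.s (g (γ j))) i =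
      g * Fin.partialProd (fun j => R.s (γ j)) i * g⁻¹ := by
  induction i using Fin.induction with
  | zero => simp
  | succ i ih => rw [Fin.partialProd_succ, Fin.partialProd_succ, ih, R.s_map hg (hγ i)]; group

lemma aprod_rE_map_fst {g : V ≃ₗ[ℝ] V} (hg : g ∈ R.Wgrp) {K : ℕ} (γ : Fin K → V)
    (hγ : ∀ j, γ j ∈ R.Φ) (ν : Fin K → ℤ) :
    (aprod (List.ofFn fun j => R.rE (g (γ j), ν j))).1 =
      g * Fin.partialProd (fun j => R.s (γ j)) (Fin.last K) * g⁻¹ := by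
  rw [R.aprod_rE_fst]
  exact R.partialProd_s_map hg γ hγ _

lemma twist_map_fst {g : V ≃ₗ[ℝ] V} (hg : g ∈ R.Wgrp) {K : ℕ} (γ : Fin K → V)
    (hγ : ∀ j, γ j ∈ R.Φ) (ν : Fin K → ℤ) (h : Fin K) :
    (R.twist (fun j => (g (γ j), ν j)) h).1 =
      ((aprod (List.ofFn fun j => R.rE (g (γ j), ν j))).1⁻¹ * g *
        Fin.partialProd (fun j => R.s (γ j)) h.castSucc) (γ h) := by
  rw [R.aprod_rE_map_fst hg γ hγ, R.twist_fst _ fun j => R.map_mem_of_mem_Wgrp hg (hγ j)]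
  simp [R.partialProd_s_map hg γ hγ, mul_assoc]

lemma aprod_rE_map_snd_comp {g : V ≃ₗ[ℝ] V} (hg : g ∈ R.Wgrp) {K : ℕ} (γ : Fin K → V)
    (hγ : ∀ j, γ j ∈ R.Φ) (ν : Fin K → ℤ) :
    (aprod (List.ofFn fun j => R.rE (g (γ j), ν j))).2 ∘ₗ
        ((aprod (List.ofFn fun j => R.rE (g (γ j), ν j))).1⁻¹ * g).toLinearMap =
      ∑ h, ((R.twist (fun j => (g (γ j), ν j)) h).2 : ℝ) • R.coroot (γ h) := by
  ext v
  rw [LinearMap.comp_apply, LinearEquiv.coe_coe, LinearEquiv.mul_apply, R.aprod_rE_fst,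
    R.aprod_rE_snd_apply _ fun j => R.map_mem_of_mem_Wgrp hg (hγ j)]
  simp [R.coroot_map hg (hγ _)]

lemma aprod_rE_map_eq_iff {g : V ≃ₗ[ℝ] V} (hg : g ∈ R.Wgrp) {K : ℕ} (γ : Fin K → V)
    (hγ : ∀ j, γ j ∈ R.Φ) (ν : Fin K → ℤ) (w : V ≃ₗ[ℝ] V) (μ : Module.Dual ℝ V) :
    aprod (List.ofFn fun j => R.rE (g (γ j), ν j)) = (w, μ) ↔
      g * Fin.partialProd (fun j => R.s (γ j)) (Fin.last K) * g⁻¹ = w ∧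
        ∑ h, ((R.twist (fun j => (g (γ j), ν j)) h).2 : ℝ) • R.coroot (γ h) =
          μ ∘ₗ (w⁻¹ * g).toLinearMap := by
  rw [← R.aprod_rE_map_snd_comp hg γ hγ ν, ← R.aprod_rE_map_fst hg γ hγ ν, Prod.ext_iff]
  exact and_congr_right fun hw => by
    rw [hw, LinearMap.cancel_right (w⁻¹ * g).surjective]

lemma afPos_twist_map_iff [DecidableEq V] {g : V ≃ₗ[ℝ] V} (hg : g ∈ R.Wgrp) {K : ℕ}
    (γ : Fin K → V) (hγ : ∀ j, γ j ∈ R.Φ) (ν : Fin K → ℤ) (h : Fin K) :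
    R.AfPos (R.twist (fun j => (g (γ j), ν j)) h) ↔
      (if ((aprod (List.ofFn fun j => R.rE (g (γ j), ν j))).1⁻¹ * g *
          Fin.partialProd (fun j => R.s (γ j)) h.castSucc) (γ h) ∈ R.pos then (0 : ℤ) else 1) ≤
        (R.twist (fun j => (g (γ j), ν j)) h).2 := by
  rw [R.afPos_iff (R.twist_fst_mem _ (fun j => R.map_mem_of_mem_Wgrp hg (hγ j)) h),
    R.twist_map_fst hg γ hγ]

end RootSystemData

lemma inv_mul_mul_eq_iff_mul_mul_inv_eq {G : Type*} [Group G] (g p w : G) :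
    w⁻¹ * g * p = g ↔ g * p * g⁻¹ = w := by
  rw [mul_assoc, inv_mul_eq_iff_eq_mul, mul_inv_eq_iff_eq_mul, eq_comm]

section Bijection

variable {V : Type} [AddCommGroup V] [Module ℝ V] {R : RootSystemData V} {N : ℕ}

lemma ReflectionOrder.β_mem_pos_s4 (RO : ReflectionOrder R N) (j : Fin N) : RO.β j ∈ R.pos := by
  rw [← Finset.mem_coe, ← RO.range_eq]
  exact Set.mem_range_self j

lemma ReflectionOrder.β_mem (RO : ReflectionOrder R N) (j : Fin N) : RO.β j ∈ R.Φ :=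
  R.pos_subset (RO.β_mem_pos_s4 j)

variable [DecidableEq V]

lemma IncPath.vert_eq {lab : Fin N → V} {S : Set (Fin N)} {u v : V ≃ₗ[ℝ] V}
    (p : IncPath R lab S u v) (i : Fin (p.len + 1)) :
    p.vert i = u * Fin.partialProd (fun j => R.s (lab (p.ix j))) i := by
  induction i using Fin.induction with
  | zero => rw [p.vert_zero, Fin.partialProd_zero, mul_one]
  | succ i ih => rw [p.step i, ih, Fin.partialProd_succ, mul_assoc]

variable {RO : ReflectionOrder R N} {n : ℕ} {u w : V ≃ₗ[ℝ] V} {μ : Module.Dual ℝ V}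

def AdmissibleType.toPath (hu : u ∈ R.Wgrp) (a : AdmissibleType R RO n u (w, μ)) :
    {p : IncPath R RO.β {j : Fin N | (j : ℕ) < n} (w⁻¹ * u) u //
      p.wt = μ ∘ₗ (w⁻¹ * u : V ≃ₗ[ℝ] V).toLinearMap} :=
  have hβ : ∀ j, RO.β (a.idx j) ∈ R.Φ := fun j => RO.β_mem _
  have hx := (R.aprod_rE_map_eq_iff hu _ hβ a.ν w μ).1 a.prod_eq
  ⟨{ len := a.K
     ix := a.idx
     mono := a.mono
     mem_S := a.bounded
     m := fun h => (R.twist (fun j => (u (RO.β (a.idx j)), a.ν j)) h).2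
     vert := fun i => w⁻¹ * u * Fin.partialProd (fun j => R.s (RO.β (a.idx j))) i
     vert_zero := by simp
     vert_last := (inv_mul_mul_eq_iff_mul_mul_inv_eq _ _ _).2 hx.1
     lab_mem := fun _ => RO.β_mem_pos_s4 _
     step := fun i => by simp only [Fin.partialProd_succ, mul_assoc]
     m_lb := fun h => by
       have hpos := (R.not_afPos_twistStrict_iff _ (fun j => R.map_mem_of_mem_Wgrp hu (hβ j)) h).1
         (a.neg_cond h)
       rwa [R.afPos_twist_map_iff hu _ hβ, congrArg Prod.fst a.prod_eq] at hpos }, hx.2⟩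

lemma AdmissibleType.toPath_injective (hu : u ∈ R.Wgrp) :
    Function.Injective (AdmissibleType.toPath (RO := RO) (n := n) (w := w) (μ := μ) hu) := by
  rintro ⟨K, idx, _, _, ν, _, _⟩ ⟨K', idx', _, _, ν', _, _⟩ hpath
  obtain ⟨rfl, hidx, hm, -⟩ := IncPath.mk.inj (congrArg Subtype.val hpath)
  obtain rfl := eq_of_heq hidx
  obtain rfl := R.twist_snd_injective _ (fun j => R.map_mem_of_mem_Wgrp hu (RO.β_mem (idx j)))
    (eq_of_heq hm)
  rfl

lemma AdmissibleType.toPath_surjective (hu : u ∈ R.Wgrp) :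
    Function.Surjective (AdmissibleType.toPath (RO := RO) (n := n) (w := w) (μ := μ) hu) := by
  rintro ⟨p, hwt⟩
  have hβ : ∀ j, RO.β (p.ix j) ∈ R.Φ := fun j => RO.β_mem _
  have huβ : ∀ j, u (RO.β (p.ix j)) ∈ R.Φ := fun j => R.map_mem_of_mem_Wgrp hu (hβ j)
  obtain ⟨ν, hν⟩ := R.twist_snd_surjective _ huβ p.m
  have hm : ∀ h, (R.twist (fun j => (u (RO.β (p.ix j)), ν j)) h).2 = p.m h := congrFun hν
  have hw : u * Fin.partialProd (fun j => R.s (RO.β (p.ix j))) (Fin.last p.len) * u⁻¹ = w :=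
    (inv_mul_mul_eq_iff_mul_mul_inv_eq _ _ _).1 (by rw [← p.vert_eq, p.vert_last])
  have hprod : aprod (List.ofFn fun h => R.rE (u (RO.β (p.ix h)), ν h)) = (w, μ) :=
    (R.aprod_rE_map_eq_iff hu _ hβ ν w μ).2 ⟨hw, by simp only [hm]; exact hwt⟩
  have hneg : ∀ h, ¬ R.AfPos (R.twistStrict (fun j => (u (RO.β (p.ix j)), ν j)) h) := fun h =>
    (R.not_afPos_twistStrict_iff _ huβ h).2 <| (R.afPos_twist_map_iff hu _ hβ ν h).2 <| by
      rw [congrArg Prod.fst hprod, hm, ← p.vert_eq]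
      exact p.m_lb h
  refine ⟨⟨p.len, p.ix, p.mono, p.mem_S, ν, hneg, hprod⟩, Subtype.ext ?_⟩
  have hvert := p.vert_eq
  cases p
  simp only [AdmissibleType.toPath, IncPath.mk.injEq, heq_eq_eq, true_and]
  exact ⟨funext hm, funext fun i => (hvert i).symm⟩

end Bijection

section

variable {V : Type} [AddCommGroup V] [Module ℝ V] [DecidableEq V]

theorem statement4_general (R : RootSystemData V) {N : ℕ} (RO : ReflectionOrder R N)
    (w : V ≃ₗ[ℝ] V) (μ : Module.Dual ℝ V)
    (u : V ≃ₗ[ℝ] V) (hu : u ∈ R.Wgrp) (n : ℕ) :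
    ∃ e : AdmissibleType R RO n u (w, μ) ≃
        {p : IncPath R RO.β {j : Fin N | (j : ℕ) < n} (w⁻¹ * u) u //
          IncPath.wt p = μ ∘ₗ ((w⁻¹ * u : V ≃ₗ[ℝ] V)).toLinearMap},
      ∀ a : AdmissibleType R RO n u (w, μ),
        ∃ h : (e a).val.len = a.K,
          (∀ i, (e a).val.ix i = a.idx (Fin.cast h i)) ∧
          (∀ i, (e a).val.m i =
            (R.twist (fun j => (u (RO.β (a.idx j)), a.ν j)) (Fin.cast h i)).2) :=
  ⟨Equiv.ofBijective _ ⟨AdmissibleType.toPath_injective hu, AdmissibleType.toPath_surjective hu⟩,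
    fun _ => ⟨rfl, fun _ => rfl, fun _ => rfl⟩⟩

/-- the admissible types for `x = w t^μ` (bounded by `n`) are in bijection with
the ≺-increasing paths bounded by `n` from `w⁻¹u` to `u` of weight `u⁻¹ w μ`; the bijection
sends the type `((n₁,ν₁),…,(n_K,ν_K))` to the increasing path with edge labels
`β_{n₁}, …, β_{n_K}`, the edge labelled `β_{n_h}` carrying the integer `m'_h`, where
`(β'_h, m'_h) = r_{b_K} ⋯ r_{b_h}(b_h)` and `b_h = (u β_{n_h}, ν_h)`. -/
theorem statement4 (R : RootSystemData V) {N : ℕ} (RO : ReflectionOrder R N)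
    (Λ : AddSubgroup (Module.Dual ℝ V))
    (hΛcoroot : ∀ α ∈ R.Φ, R.coroot α ∈ Λ)
    (hΛstable : ∀ g ∈ R.Wgrp, ∀ μ ∈ Λ, μ ∘ₗ (g : V ≃ₗ[ℝ] V).toLinearMap ∈ Λ)
    (w : V ≃ₗ[ℝ] V) (hw : w ∈ R.Wgrp) (μ : Module.Dual ℝ V) (hμ : μ ∈ Λ)
    (u : V ≃ₗ[ℝ] V) (hu : u ∈ R.Wgrp) (n : ℕ) (hn : n ≤ N) :
    ∃ e : AdmissibleType R RO n u (w, μ) ≃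
        {p : IncPath R RO.β {j : Fin N | (j : ℕ) < n} (w⁻¹ * u) u //
          IncPath.wt p = μ ∘ₗ ((w⁻¹ * u : V ≃ₗ[ℝ] V)).toLinearMap},
      ∀ a : AdmissibleType R RO n u (w, μ),
        ∃ h : (e a).val.len = a.K,
          (∀ i, (e a).val.ix i = a.idx (Fin.cast h i)) ∧
          (∀ i, (e a).val.m i =
            (R.twist (fun j => (u (RO.β (a.idx j)), a.ν j)) (Fin.cast h i)).2) :=
  statement4_general R RO w μ u hu n

end
end
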